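/- Let Z be a standard normal random variable and c ≠ 0 a real constant. Then (Z + c)² stochastically dominates Z²: for every t > 0, P((Z+c)² > t) > P(Z² > t). -/

import Mathlib

/-!
Writing `s = √t`, the event `(Z + c)² ≤ t` is `Z ∈ [-c - s, -c + s]`, an interval of the same
length as `[-s, s]` but not centred at `0`. The mass `G a` that a density `f` strictly decreasing
in `|x|` gives to `[a - s, a + s]` has derivative `f (a + s) - f (a - s)`, which is
positive for `a < 0` and negative for `a > 0`; so `G` has a strict maximum at `a = 0`, and passing
to complements gives the strict inequality of the tails.
-/

open MeasureTheory ProbabilityTheory Real Set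

theorem intervalIntegral_sub_add_lt_of_abs_lt {f : ℝ → ℝ} (hf : Continuous f)
    (hf_abs : ∀ x y, |x| < |y| → f y < f x) {a s : ℝ} (hs : 0 < s) (ha : a ≠ 0) :
    ∫ x in (a - s)..(a + s), f x < ∫ x in (-s)..s, f x := by
  set G : ℝ → ℝ := fun a ↦ ∫ x in (a - s)..(a + s), f x
  have hG_eq : G = fun a ↦ (∫ x in (0 : ℝ)..(a + s), f x) - ∫ x in (0 : ℝ)..(a - s), f x := by
    funext a
    exact (intervalIntegral.integral_interval_sub_left (hf.intervalIntegrable _ _)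
      (hf.intervalIntegrable _ _)).symm
  have hG : ∀ a, HasDerivAt G (f (a + s) - f (a - s)) a := fun a ↦ by
    have hF := fun b ↦ (hf.integral_hasStrictDerivAt 0 b).hasDerivAt
    rw [hG_eq]
    exact ((hF _).comp_add_const a s).sub ((hF _).comp_sub_const a s)
  have hG_cont : Continuous G := continuous_iff_continuousAt.2 fun a ↦ (hG a).continuousAt
  have hG_zero : G 0 = ∫ x in (-s)..s, f x := by simp [G]
  rw [← hG_zero]
  rcases ha.lt_or_gt with ha | ha
  · have hmono : StrictMonoOn G (Iic 0) := by
      refine strictMonoOn_of_deriv_pos (convex_Iic 0) hG_cont.continuousOn fun x hx ↦ ?_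
      rw [interior_Iic, mem_Iio] at hx
      have := hf_abs (x + s) (x - s) (sq_lt_sq.1 (by nlinarith))
      rw [(hG x).deriv]
      linarith
    exact hmono ha.le self_mem_Iic ha
  · have hanti : StrictAntiOn G (Ici 0) := by
      refine strictAntiOn_of_deriv_neg (convex_Ici 0) hG_cont.continuousOn fun x hx ↦ ?_
      rw [interior_Ici, mem_Ioi] at hx
      have := hf_abs (x - s) (x + s) (sq_lt_sq.1 (by nlinarith))
      rw [(hG x).deriv]
      linarith
    exact hanti self_mem_Ici ha.le ha

theorem continuous_gaussianPDFReal (m : ℝ) (v : NNReal) : Continuous (gaussianPDFReal m v) := by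
  rw [gaussianPDFReal_def]
  fun_prop

theorem gaussianPDFReal_lt_of_abs_sub_lt {m : ℝ} {v : NNReal} (hv : v ≠ 0) {x y : ℝ}
    (h : |x - m| < |y - m|) : gaussianPDFReal m v y < gaussianPDFReal m v x := by
  have hv' : (0 : ℝ) < v := by positivity
  rw [gaussianPDFReal_def]
  refine mul_lt_mul_of_pos_left (exp_lt_exp.2 ?_) (by positivity)
  have := sq_lt_sq.2 h
  rw [div_lt_div_iff_of_pos_right (by positivity)]
  linarith

theorem gaussianReal_Icc_sub_add_lt {v : NNReal} (hv : v ≠ 0) {a s : ℝ} (hs : 0 < s)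
    (ha : a ≠ 0) : gaussianReal 0 v (Icc (a - s) (a + s)) < gaussianReal 0 v (Icc (-s) s) := by
  have h_Icc : ∀ b c : ℝ, b ≤ c →
      gaussianReal 0 v (Icc b c) = ENNReal.ofReal (∫ x in b..c, gaussianPDFReal 0 v x) :=
    fun b c hbc ↦ by
      rw [gaussianReal_apply_eq_integral 0 hv, integral_Icc_eq_integral_Ioc,
        intervalIntegral.integral_of_le hbc]
  rw [h_Icc _ _ (by linarith), h_Icc _ _ (by linarith), ENNReal.ofReal_lt_ofReal_iff_of_nonneg
    (intervalIntegral.integral_nonneg (by linarith) fun x _ ↦ gaussianPDFReal_nonneg 0 v x)]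
  refine intervalIntegral_sub_add_lt_of_abs_lt (continuous_gaussianPDFReal 0 v)
    (fun x y h ↦ gaussianPDFReal_lt_of_abs_sub_lt hv ?_) hs ha
  simpa using h

theorem setOf_lt_add_sq_eq_compl_Icc {t : ℝ} (ht : 0 ≤ t) (c : ℝ) :
    {x : ℝ | t < (x + c) ^ 2} = (Icc (-c - √t) (-c + √t))ᶜ := by
  ext x
  simp only [mem_ofPred_eq, mem_compl_iff, mem_Icc, ← not_le, Real.sq_le ht]
  constructor <;> rintro h ⟨h₁, h₂⟩ <;> exact h ⟨by linarith, by linarith⟩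

theorem gaussianReal_setOf_lt_sq_lt_setOf_lt_add_sq {v : NNReal} (hv : v ≠ 0) {t : ℝ} (ht : 0 < t) {c : ℝ}
    (hc : c ≠ 0) :
    gaussianReal 0 v {x | t < x ^ 2} < gaussianReal 0 v {x | t < (x + c) ^ 2} := by
  have h_centred : {x : ℝ | t < x ^ 2} = (Icc (-√t) √t)ᶜ := by
    simpa using setOf_lt_add_sq_eq_compl_Icc ht.le 0
  rw [h_centred, setOf_lt_add_sq_eq_compl_Icc ht.le, prob_compl_eq_one_sub measurableSet_Icc,
    prob_compl_eq_one_sub measurableSet_Icc,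
    (ENNReal.cancel_of_ne ENNReal.one_ne_top).tsub_lt_tsub_iff_left_of_le
      (ENNReal.cancel_of_ne (measure_ne_top _ _)) prob_le_one]
  exact gaussianReal_Icc_sub_add_lt hv (sqrt_pos.2 ht) (neg_ne_zero.2 hc)

theorem stmt11_general {Ω : Type*} [MeasurableSpace Ω] (μ : Measure Ω)
    (Z : Ω → ℝ) (hZ : Measurable Z)
    (hZgauss : Measure.map Z μ = gaussianReal 0 1)
    (c : ℝ) (hc : c ≠ 0) :
    ∀ t : ℝ, 0 < t → μ {ω | t < Z ω ^ 2} < μ {ω | t < (Z ω + c) ^ 2} := by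
  intro t ht
  have h_law : ∀ d : ℝ, μ {ω | t < (Z ω + d) ^ 2} = gaussianReal 0 1 {x | t < (x + d) ^ 2} :=
    fun d ↦ by
      rw [← hZgauss, Measure.map_apply hZ (measurableSet_lt measurable_const (by fun_prop))]
      rfl
  have h_law_zero := h_law 0
  simp only [add_zero] at h_law_zero
  rw [h_law_zero, h_law c]
  exact gaussianReal_setOf_lt_sq_lt_setOf_lt_add_sq one_ne_zero ht hc

/-- If Z is standard normal and c ≠ 0, then (Z+c)² strictly stochastically dominates Z². -/
theorem stmt11 {Ω : Type*} [MeasurableSpace Ω] (μ : Measure Ω) [IsProbabilityMeasure μ]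
    (Z : Ω → ℝ) (hZ : Measurable Z)
    (hZgauss : Measure.map Z μ = gaussianReal 0 1)
    (c : ℝ) (hc : c ≠ 0) :
    ∀ t : ℝ, 0 < t → μ {ω | t < Z ω ^ 2} < μ {ω | t < (Z ω + c) ^ 2} :=
  stmt11_general μ Z hZ hZgauss c hc
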